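/- arXiv:1902.09176 — 2 statements merged into one kernel-verified Lean document; each statement's English description precedes it below -/
import Mathlib

section
/- The operator ⋄ on subcategories of an abelian category is associative: for subcategories U₁, U₂, U₃ of an abelian category A, (U₁ ⋄ U₂) ⋄ U₃ = U₁ ⋄ (U₂ ⋄ U₃). -/
open CategoryTheory CategoryTheory.Limits

attribute [local instance] CategoryTheory.Abelian.hasFiniteBiproducts

universe v u

variable {A : Type u} [Category.{v} A] [Abelian A]

/-- The objects that are direct summands of finite direct sums of objects from `S`. -/
def addClosure (S : Set A) : Set A :=
  {X | ∃ (n : ℕ) (f : Fin n → A) (Y : A),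
    (∀ i, f i ∈ S) ∧ Nonempty ((X ⊞ Y) ≅ ⨁ f)}

/-- The operator `U ⋄ V`: the additive closure of the middle terms of short exact
sequences with outer terms in `U` and `V`. -/
def diamondSet (U V : Set A) : Set A :=
  addClosure {X | ∃ S : ShortComplex A,
    S.ShortExact ∧ S.X₂ = X ∧ S.X₁ ∈ U ∧ S.X₃ ∈ V}

/-- The filtration `⟨S⟩ₙ`. -/
def bracket (S : Set A) : ℕ → Set A
  | 0 => {X | IsZero X}
  | 1 => addClosure S
  | n + 2 => diamondSet (addClosure S) (bracket S (n + 1))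

/-- The extension dimension of an abelian category. -/
noncomputable def extDim (A : Type u) [Category.{v} A] [Abelian A] : ℕ∞ :=
  sInf {n : ℕ∞ | ∃ (k : ℕ) (T : A), (k : ℕ∞) = n ∧ bracket {T} (k + 1) = Set.univ}

/-- `ClassRes P n X` : there is an exact sequence `0 → Pₙ → ⋯ → P₀ → X → 0` with all `Pᵢ ∈ P`. -/
def ClassRes (P : Set A) : ℕ → A → Prop
  | 0, X => X ∈ P
  | n + 1, X => ∃ S : ShortComplex A,
      S.ShortExact ∧ S.X₃ = X ∧ S.X₂ ∈ P ∧ ClassRes P n S.X₁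

/-- `ClassCores I n X` : there is an exact sequence `0 → X → I₀ → ⋯ → Iₙ → 0` with all `Iᵢ ∈ I`. -/
def ClassCores (I : Set A) : ℕ → A → Prop
  | 0, X => X ∈ I
  | n + 1, X => ∃ S : ShortComplex A,
      S.ShortExact ∧ S.X₁ = X ∧ S.X₂ ∈ I ∧ ClassCores I n S.X₃

/-!
Both inclusions come down to a single short exact sequence. If `0 → M → X → W' → 0` has
`W' ∈ W` and `M ⊕ N` is an extension of `V' ∈ V` by `U' ∈ U`, then adding `N` gives
`0 → M ⊕ N → X ⊕ N → W' → 0`, and the third isomorphism theorem for `U' ⊆ M ⊕ N ⊆ X ⊕ N`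
makes `X ⊕ N` an extension of `(X ⊕ N) / U'` by `U'`, where `(X ⊕ N) / U'` is an extension
of `W'` by `V'`; so `X ∈ U ⋄ (V ⋄ W)`. The reverse inclusion is the mirror-image argument,
using the kernel form of the isomorphism theorem, read off from the quotient form in the
opposite category. Direct summands cost nothing, because extensions between
classes closed under finite direct sums are again closed under finite direct sums.
-/

section Biproducts

variable {C : Type*} [Category C] [Preadditive C] [HasFiniteBiproducts C] [HasBinaryBiproducts C]

noncomputable def biproductSumElimIso {J K : Type*} [Finite J] [Finite K]
    (f : J → C) (g : K → C) : (⨁ f) ⊞ (⨁ g) ≅ ⨁ Sum.elim f g :=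
  (Fan.combPairIsLimit (biproduct.isLimit f) (biproduct.isLimit g)
    (BinaryBiproduct.isLimit _ _)).conePointUniqueUpToIso (biproduct.isLimit _)

open ZeroObject

variable [HasZeroObject C]

structure IsAdditivelyClosed (T : Set C) : Prop where
  of_iso {X Y : C} : (X ≅ Y) → X ∈ T → Y ∈ T
  zero_mem : (0 : C) ∈ T
  biprod_mem {X Y : C} : X ∈ T → Y ∈ T → (X ⊞ Y) ∈ T

lemma IsAdditivelyClosed.biproduct_mem {T : Set C} (hT : IsAdditivelyClosed T) {J : Type*}
    [Finite J] (f : J → C) (hf : ∀ j, f j ∈ T) : (⨁ f) ∈ T := by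
  let P : ObjectProperty C := (· ∈ T)
  have : P.IsClosedUnderIsomorphisms := ⟨hT.of_iso⟩
  have : P.ContainsZero := ⟨0, isZero_zero C, hT.zero_mem⟩
  have : P.IsClosedUnderBinaryProducts := by
    refine ObjectProperty.IsClosedUnderLimitsOfShape.mk' ?_
    rintro _ ⟨F, hF⟩
    exact hT.of_iso (biprod.isoProd _ _ ≪≫ (HasLimit.isoOfNatIso (diagramIsoPair F)).symm)
      (hT.biprod_mem (hF _) (hF _))
  have := ObjectProperty.IsClosedUnderFiniteProducts.mk' (P := P)
  exact hT.of_iso (biproduct.isoProduct f).symm (P.prop_product hf)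

end Biproducts

section AddClosure

open ZeroObject

variable {S : Set A}

lemma mem_addClosure_of_iso_biproduct {X : A} {J : Type*} [Finite J] {f : J → A}
    (hf : ∀ j, f j ∈ S) (e : X ≅ ⨁ f) : X ∈ addClosure S := by
  obtain ⟨n, ⟨σ⟩⟩ := Finite.exists_equiv_fin J
  exact ⟨n, f ∘ σ.symm, 0, fun i => hf _, ⟨(isoBiprodZero (isZero_zero A)).symm ≪≫ e ≪≫
    biproduct.whiskerEquiv σ fun j => eqToIso (by simp)⟩⟩

lemma subset_addClosure (S : Set A) : S ⊆ addClosure S := fun X hX =>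
  mem_addClosure_of_iso_biproduct (J := Unit) (fun _ => hX)
    (biproductUniqueIso fun _ : Unit => X).symm

lemma mem_addClosure_of_summand {X R Z : A} (e : X ⊞ R ≅ Z) (hZ : Z ∈ addClosure S) :
    X ∈ addClosure S := by
  obtain ⟨n, f, Y, hf, ⟨φ⟩⟩ := hZ
  exact ⟨n, f, R ⊞ Y, hf,
    ⟨(biprod.associator X R Y).symm ≪≫ biprod.mapIso e (Iso.refl Y) ≪≫ φ⟩⟩

lemma mem_addClosure_of_retract {X Z : A} (h : Retract X Z) (hZ : Z ∈ addClosure S) :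
    X ∈ addClosure S := by
  have : IsSplitMono h.i := ⟨⟨h.r, h.retract⟩⟩
  exact mem_addClosure_of_summand ((isBilimitBinaryBiconeOfIsSplitMonoOfCokernel
    (cokernelIsCokernel h.i)).isLimit.conePointUniqueUpToIso (BinaryBiproduct.isLimit _ _)).symm hZ

lemma addClosure_isAdditivelyClosed (S : Set A) : IsAdditivelyClosed (addClosure S) where
  of_iso e := mem_addClosure_of_retract (Retract.ofIso e.symm)
  zero_mem := mem_addClosure_of_iso_biproduct (J := Empty) (f := Empty.elim) (fun j => j.elim)
    ((isZero_zero A).iso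
      ((IsZero.iff_id_eq_zero _).2 (biproduct.hom_ext _ _ fun j => j.elim)))
  biprod_mem := by
    rintro X Z ⟨n, f, Y, hf, ⟨e⟩⟩ ⟨m, g, Y', hg, ⟨e'⟩⟩
    refine mem_addClosure_of_retract (Z := (X ⊞ Y) ⊞ (Z ⊞ Y'))
      ⟨biprod.map biprod.inl biprod.inl, biprod.map biprod.fst biprod.fst, by ext <;> simp⟩ ?_
    exact mem_addClosure_of_iso_biproduct (f := Sum.elim f g) (Sum.rec hf hg)
      (biprod.mapIso e e' ≪≫ biproductSumElimIso f g)

lemma IsAdditivelyClosed.exists_biprod_mem {T : Set A} (hT : IsAdditivelyClosed T) {X : A}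
    (hX : X ∈ addClosure T) : ∃ Y, (X ⊞ Y) ∈ T := by
  obtain ⟨n, f, Y, hf, ⟨e⟩⟩ := hX
  exact ⟨Y, hT.of_iso e.symm (hT.biproduct_mem f hf)⟩

lemma IsAdditivelyClosed.addClosure_subset {T T' : Set A} (hT : IsAdditivelyClosed T)
    (h : T ⊆ addClosure T') : addClosure T ⊆ addClosure T' := fun _ hX =>
  let ⟨_, hY⟩ := hT.exists_biprod_mem hX
  mem_addClosure_of_summand (Iso.refl _) (h hY)

end AddClosure

section Extensions

variable {C : Type*} [Category C]

def IsExtension [HasZeroMorphisms C] (X₁ X₂ X₃ : C) : Prop :=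
  ∃ (f : X₁ ⟶ X₂) (g : X₂ ⟶ X₃) (w : f ≫ g = 0), (ShortComplex.mk f g w).ShortExact

namespace IsExtension

open Opposite

lemma of_iso [HasZeroMorphisms C] {X₁ X₂ X₃ Y₁ Y₂ Y₃ : C} (h : IsExtension X₁ X₂ X₃)
    (e₁ : X₁ ≅ Y₁) (e₂ : X₂ ≅ Y₂) (e₃ : X₃ ≅ Y₃) : IsExtension Y₁ Y₂ Y₃ := by
  obtain ⟨f, g, w, hS⟩ := h
  refine ⟨e₁.inv ≫ f ≫ e₂.hom, e₂.inv ≫ g ≫ e₃.hom, by simp [reassoc_of% w], ?_⟩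
  exact ShortComplex.shortExact_of_iso (ShortComplex.isoMk e₁ e₂ e₃ (by simp) (by simp)) hS

lemma op [HasZeroMorphisms C] {X₁ X₂ X₃ : C} (h : IsExtension X₁ X₂ X₃) :
    IsExtension (op X₃) (op X₂) (op X₁) :=
  let ⟨f, g, _, hS⟩ := h
  ⟨g.op, f.op, _, hS.op⟩

lemma unop [HasZeroMorphisms C] {X₁ X₂ X₃ : Cᵒᵖ} (h : IsExtension X₁ X₂ X₃) :
    IsExtension (unop X₃) (unop X₂) (unop X₁) :=
  let ⟨f, g, _, hS⟩ := h
  ⟨g.unop, f.unop, _, hS.unop⟩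

open ZeroObject

lemma self_zero [Preadditive C] [HasZeroObject C] (X : C) : IsExtension X X 0 :=
  ⟨𝟙 X, 0, by simp, (ShortComplex.Splitting.ofIsIsoOfIsZero _ (by dsimp; infer_instance)
    (isZero_zero C)).shortExact⟩

lemma zero_self [Preadditive C] [HasZeroObject C] (X : C) : IsExtension 0 X X :=
  ⟨0, 𝟙 X, by simp, (ShortComplex.Splitting.ofIsZeroOfIsIso _ (isZero_zero C)
    (by dsimp; infer_instance)).shortExact⟩

variable [Abelian C]

lemma biprod {X₁ X₂ X₃ Y₁ Y₂ Y₃ : C} (h : IsExtension X₁ X₂ X₃) (h' : IsExtension Y₁ Y₂ Y₃) :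
    IsExtension (X₁ ⊞ Y₁) (X₂ ⊞ Y₂) (X₃ ⊞ Y₃) := by
  obtain ⟨f, g, w, hS⟩ := h
  obtain ⟨f', g', w', hS'⟩ := h'
  have := hS.mono_f; have := hS.epi_g; have := hS'.mono_f; have := hS'.epi_g
  refine ⟨biprod.map f f', biprod.map g g', by ext <;> simp [reassoc_of% w, reassoc_of% w'],
    .mk' ?_ inferInstance inferInstance⟩
  rw [ShortComplex.exact_iff_exact_up_to_refinements]
  intro Z x hx
  obtain ⟨Z₁, π₁, hπ₁, x₁, hx₁⟩ := hS.exact.exact_up_to_refinements (x ≫ biprod.fst)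
    (by simpa using hx =≫ biprod.fst)
  obtain ⟨Z₂, π₂, hπ₂, x₂, hx₂⟩ := hS'.exact.exact_up_to_refinements (π₁ ≫ x ≫ biprod.snd)
    (by simpa using π₁ ≫= hx =≫ biprod.snd)
  refine ⟨Z₂, π₂ ≫ π₁, epi_comp _ _, biprod.lift (π₂ ≫ x₁) x₂, ?_⟩
  ext
  · simpa using π₂ ≫= hx₁
  · simpa using hx₂

open Abelian Pseudoelement in
/-- Noether's third isomorphism theorem, with `Q = X₂ / Y₁`. -/
lemma exists_quotient {X₁ X₂ X₃ Y₁ Y₂ : C} (h : IsExtension X₁ X₂ X₃)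
    (h₁ : IsExtension Y₁ X₁ Y₂) : ∃ Q, IsExtension Y₁ X₂ Q ∧ IsExtension Y₂ Q X₃ := by
  obtain ⟨f, g, w, hS⟩ := h
  obtain ⟨i, p, w', hT⟩ := h₁
  have := hS.mono_f; have := hS.epi_g; have := hT.mono_f; have := hT.epi_g
  have hQ : (ShortComplex.mk (i ≫ f) (cokernel.π (i ≫ f)) (cokernel.condition _)).ShortExact :=
    .mk' (ShortComplex.exact_of_g_is_cokernel _ (cokernelIsCokernel _)) (mono_comp _ _)
      inferInstance
  obtain ⟨v, hv⟩ := CokernelCofork.IsColimit.desc' hT.gIsCokernel (f ≫ cokernel.π (i ≫ f))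
    (by rw [← Category.assoc]; exact cokernel.condition _)
  dsimp at hv
  let u := cokernel.desc (i ≫ f) g (by simp [w])
  have hπu : cokernel.π (i ≫ f) ≫ u = g := cokernel.π_desc _ _ _
  have hvu : v ≫ u = 0 := by
    rw [← cancel_epi p, reassoc_of% hv, hπu, w, comp_zero]
  refine ⟨cokernel (i ≫ f), ⟨_, _, _, hQ⟩, ⟨v, u, hvu, .mk' ?_ ?_ (epi_of_epi_fac hπu)⟩⟩
  · apply Pseudoelement.exact_of_pseudo_exact
    intro b hb
    obtain ⟨b', rfl⟩ := Pseudoelement.pseudo_surjective_of_epi (cokernel.π (i ≫ f)) b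
    rw [← Pseudoelement.comp_apply, hπu] at hb
    obtain ⟨a, ha⟩ := Pseudoelement.pseudo_exact_of_exact hS.exact b' hb
    exact ⟨p a, by rw [← Pseudoelement.comp_apply, hv, Pseudoelement.comp_apply, ha]⟩
  · apply Pseudoelement.mono_of_zero_of_map_zero
    intro a ha
    obtain ⟨a', rfl⟩ := Pseudoelement.pseudo_surjective_of_epi p a
    rw [← Pseudoelement.comp_apply, hv, Pseudoelement.comp_apply] at ha
    obtain ⟨a₁, ha₁⟩ := Pseudoelement.pseudo_exact_of_exact hQ.exact (f a') ha
    rw [Pseudoelement.comp_apply] at ha₁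
    rw [← Pseudoelement.pseudo_injective_of_mono f ha₁, ← Pseudoelement.comp_apply, w',
      Pseudoelement.zero_apply]

lemma exists_kernel {X₁ X₂ X₃ Y₁ Y₂ : C} (h : IsExtension X₁ X₂ X₃)
    (h₃ : IsExtension Y₁ X₃ Y₂) : ∃ K, IsExtension K X₂ Y₂ ∧ IsExtension X₁ K Y₁ :=
  let ⟨Q, hQ₁, hQ₂⟩ := h.op.exists_quotient h₃.op
  ⟨Opposite.unop Q, hQ₁.unop, hQ₂.unop⟩

end IsExtension

end Extensions

section Diamond

open ZeroObject

def extensions (P Q : Set A) : Set A :=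
  {X | ∃ X₁ ∈ P, ∃ X₃ ∈ Q, IsExtension X₁ X X₃}

lemma diamondSet_eq_addClosure_extensions (P Q : Set A) :
    diamondSet P Q = addClosure (extensions P Q) := by
  refine congrArg addClosure (Set.ext fun X => ⟨?_, ?_⟩)
  · rintro ⟨S, hS, rfl, h₁, h₃⟩
    exact ⟨_, h₁, _, h₃, S.f, S.g, S.zero, hS⟩
  · rintro ⟨_, h₁, _, h₃, _, _, _, hS⟩
    exact ⟨_, hS, rfl, h₁, h₃⟩

lemma IsAdditivelyClosed.extensions {P Q : Set A} (hP : IsAdditivelyClosed P)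
    (hQ : IsAdditivelyClosed Q) : IsAdditivelyClosed (extensions P Q) where
  of_iso e := fun ⟨_, h₁, _, h₃, hX⟩ => ⟨_, h₁, _, h₃, hX.of_iso (Iso.refl _) e (Iso.refl _)⟩
  zero_mem := ⟨0, hP.zero_mem, 0, hQ.zero_mem, IsExtension.self_zero 0⟩
  biprod_mem := fun ⟨_, h₁, _, h₃, hX⟩ ⟨_, h₁', _, h₃', hY⟩ =>
    ⟨_, hP.biprod_mem h₁ h₁', _, hQ.biprod_mem h₃ h₃', hX.biprod hY⟩

lemma diamondSet_subset {P Q R S : Set A} (hP : IsAdditivelyClosed P)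
    (hQ : IsAdditivelyClosed Q) (h : extensions P Q ⊆ diamondSet R S) :
    diamondSet P Q ⊆ diamondSet R S := by
  rw [diamondSet_eq_addClosure_extensions P Q]
  rw [diamondSet_eq_addClosure_extensions R S] at h ⊢
  exact (hP.extensions hQ).addClosure_subset h

variable {U V W : Set A}

lemma extensions_diamondSet_left_subset (hU : IsAdditivelyClosed U)
    (hV : IsAdditivelyClosed V) (hW : IsAdditivelyClosed W) :
    extensions (diamondSet U V) W ⊆ diamondSet U (diamondSet V W) := by
  rintro X ⟨M, hM, W', hW', hX⟩
  rw [diamondSet_eq_addClosure_extensions] at hM ⊢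
  obtain ⟨N, U', hU', V', hV', hMN⟩ := (hU.extensions hV).exists_biprod_mem hM
  obtain ⟨Q, hQ₁, hQ₂⟩ := (hX.biprod (IsExtension.self_zero N)).exists_quotient hMN
  have hQ : Q ∈ diamondSet V W := by
    rw [diamondSet_eq_addClosure_extensions]
    exact subset_addClosure _ ⟨V', hV', _, hW.biprod_mem hW' hW.zero_mem, hQ₂⟩
  exact mem_addClosure_of_summand (Iso.refl _) (subset_addClosure _ ⟨U', hU', Q, hQ, hQ₁⟩)

lemma extensions_diamondSet_right_subset (hU : IsAdditivelyClosed U)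
    (hV : IsAdditivelyClosed V) (hW : IsAdditivelyClosed W) :
    extensions U (diamondSet V W) ⊆ diamondSet (diamondSet U V) W := by
  rintro X ⟨U', hU', M, hM, hX⟩
  rw [diamondSet_eq_addClosure_extensions] at hM ⊢
  obtain ⟨N, V', hV', W', hW', hMN⟩ := (hV.extensions hW).exists_biprod_mem hM
  obtain ⟨K, hK₁, hK₂⟩ := (hX.biprod (IsExtension.zero_self N)).exists_kernel hMN
  have hK : K ∈ diamondSet U V := by
    rw [diamondSet_eq_addClosure_extensions]
    exact subset_addClosure _ ⟨_, hU.biprod_mem hU' hU.zero_mem, V', hV', hK₂⟩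
  exact mem_addClosure_of_summand (Iso.refl _) (subset_addClosure _ ⟨K, hK, W', hW', hK₁⟩)

end Diamond

/-- The diamond operator on subcategories (closed under isomorphisms, finite direct
sums and direct summands) of an abelian category is associative. -/
theorem diamond_assoc (U V W : Set A)
    (hU : addClosure U = U) (hV : addClosure V = V) (hW : addClosure W = W) :
    diamondSet (diamondSet U V) W = diamondSet U (diamondSet V W) := by
  have hU' := hU ▸ addClosure_isAdditivelyClosed U
  have hV' := hV ▸ addClosure_isAdditivelyClosed V
  have hW' := hW ▸ addClosure_isAdditivelyClosed W
  exact Set.Subset.antisymm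
    (diamondSet_subset (addClosure_isAdditivelyClosed _) hW'
      (extensions_diamondSet_left_subset hU' hV' hW'))
    (diamondSet_subset hU' (addClosure_isAdditivelyClosed _)
      (extensions_diamondSet_right_subset hU' hV' hW'))
end

section
/- Let A be an abelian category with enough projectives and injectives admitting an additive generating object. Then the extension dimension of A is at most the representation dimension of A minus two: dim A ≤ repdim A − 2. -/
open CategoryTheory CategoryTheory.Limits

attribute [local instance] CategoryTheory.Abelian.hasFiniteBiproducts

universe v u

variable {A : Type u} [Category.{v} A] [Abelian A]

/-- The weak `M`-resolution dimension of an object `X`. -/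
noncomputable def wResDim (M X : A) : ℕ∞ :=
  sInf {n : ℕ∞ | ∃ i : ℕ, (i : ℕ∞) = n ∧ ClassRes (addClosure {M}) i X}

/-- The weak resolution dimension of an abelian category. -/
noncomputable def wResolDim (A : Type u) [Category.{v} A] [Abelian A] : ℕ∞ :=
  ⨅ M : A, ⨆ X : A, wResDim M X

/-- `A` admits an additive generating object. -/
def HasAddGenerator (A : Type u) [Category.{v} A] [Abelian A] : Prop :=
  ∃ G : A, ∀ X : A, ∃ G' ∈ addClosure ({G} : Set A), ∃ f : G' ⟶ X, Epi f

/-- `ResHomExact M n X` : there is a `Hom(add M, -)`-exact exact sequence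
`0 → M_n → ⋯ → M₀ → X → 0` with all `Mᵢ ∈ add M`. -/
def ResHomExact (M : A) : ℕ → A → Prop
  | 0, X => X ∈ addClosure {M}
  | n + 1, X => ∃ S : ShortComplex A,
      S.ShortExact ∧ S.X₃ = X ∧ S.X₂ ∈ addClosure {M} ∧
      (∀ N ∈ addClosure ({M} : Set A), ∀ h : N ⟶ S.X₃, ∃ h' : N ⟶ S.X₂, h' ≫ S.g = h) ∧
      ResHomExact M n S.X₁

/-- `CoresHomExact M n X` : there is a `Hom(-, add M)`-exact exact sequence
`0 → X → N₀ → ⋯ → N_n → 0` with all `Nᵢ ∈ add M`. -/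
def CoresHomExact (M : A) : ℕ → A → Prop
  | 0, X => X ∈ addClosure {M}
  | n + 1, X => ∃ S : ShortComplex A,
      S.ShortExact ∧ S.X₁ = X ∧ S.X₂ ∈ addClosure {M} ∧
      (∀ N ∈ addClosure ({M} : Set A), ∀ h : S.X₁ ⟶ N, ∃ h' : S.X₂ ⟶ N, S.f ≫ h' = h) ∧
      CoresHomExact M n S.X₃

/-- The representation dimension of an abelian category (Auslander). -/
noncomputable def repDim (A : Type u) [Category.{v} A] [Abelian A] : ℕ∞ :=
  sInf {n : ℕ∞ | ∃ i : ℕ, (i : ℕ∞) = n ∧ 2 ≤ i ∧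
    ∃ M : A, ∀ X : A, ResHomExact M (i - 2) X ∧ CoresHomExact M (i - 2) X}

/-!
Let `M` realise `repdim A = d + 2`, so that every `X` has an exact sequence
`0 → X → N₀ → ⋯ → N_d → 0` with `Nᵢ ∈ add M`, and put `T_g = ⨁_{j ≤ g} (Ωʲ M ⊕ P(Ωʲ M))`.
Every object of `add T_g`, after adding a complement in `add T_g`, is the quotient of a projective
of `add T_g` by an object of `add T_{g+1}`. Walking backwards along the coresolution, a
horseshoe-type argument (pull back along these presentations; the resulting extensions of
projectives split) shows that `X ⊕ R` is an iterated extension of `d + 1` objects of `add T_d`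
for some `R`. So `X ∈ ⟨T_d⟩_{d+1}` for every `X`, that is, `dim A ≤ d`.
-/

namespace ExtensionDimension

open ZeroObject

def IsSummand (X W : A) : Prop := ∃ Y : A, Nonempty (X ⊞ Y ≅ W)

namespace IsSummand

lemma of_iso {X W : A} (e : X ≅ W) : IsSummand X W :=
  ⟨0, ⟨(isoBiprodZero (isZero_zero A)).symm ≪≫ e⟩⟩

lemma refl (X : A) : IsSummand X X := of_iso (Iso.refl X)

lemma inl (X Y : A) : IsSummand X (X ⊞ Y) := ⟨Y, ⟨Iso.refl _⟩⟩

lemma inr (X Y : A) : IsSummand Y (X ⊞ Y) := ⟨X, ⟨biprod.braiding Y X⟩⟩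

lemma iso_right {X W W' : A} (h : IsSummand X W) (e : W ≅ W') : IsSummand X W' := by
  obtain ⟨Y, ⟨e'⟩⟩ := h
  exact ⟨Y, ⟨e' ≪≫ e⟩⟩

lemma trans {X W V : A} (h : IsSummand X W) (h' : IsSummand W V) : IsSummand X V := by
  obtain ⟨Y, ⟨e⟩⟩ := h
  obtain ⟨Z, ⟨e'⟩⟩ := h'
  exact ⟨Y ⊞ Z, ⟨(biprod.associator X Y Z).symm ≪≫ biprod.mapIso e (Iso.refl Z) ≪≫ e'⟩⟩

lemma biprod {X W X' W' : A} (h : IsSummand X W) (h' : IsSummand X' W') :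
    IsSummand (X ⊞ X') (W ⊞ W') := by
  obtain ⟨Y, ⟨e⟩⟩ := h
  obtain ⟨Y', ⟨e'⟩⟩ := h'
  let shuffle : (X ⊞ X') ⊞ (Y ⊞ Y') ≅ (X ⊞ Y) ⊞ (X' ⊞ Y') :=
    biprod.associator _ _ _ ≪≫ biprod.mapIso (Iso.refl X)
      ((biprod.associator _ _ _).symm ≪≫ biprod.mapIso (biprod.braiding X' Y) (Iso.refl Y') ≪≫
        biprod.associator _ _ _) ≪≫ (biprod.associator _ _ _).symm
  exact ⟨Y ⊞ Y', ⟨shuffle ≪≫ biprod.mapIso e e'⟩⟩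

end IsSummand

noncomputable def biprodPow (T : A) : ℕ → A
  | 0 => 0
  | n + 1 => T ⊞ biprodPow T n

noncomputable def biproductFinSuccIso {n : ℕ} (f : Fin (n + 1) → A) :
    ⨁ f ≅ f 0 ⊞ ⨁ (fun i : Fin n => f i.succ) where
  hom := biprod.lift (biproduct.π f 0) (biproduct.lift fun i => biproduct.π f i.succ)
  inv := biprod.desc (biproduct.ι f 0) (biproduct.desc fun i => biproduct.ι f i.succ)
  hom_inv_id := by
    rw [biprod.lift_desc, biproduct.lift_desc, ← biproduct.total, Fin.sum_univ_succ]
  inv_hom_id := by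
    apply biprod.hom_ext' <;> apply biprod.hom_ext
    · simp
    · ext j
      simp [biproduct.ι_π_ne _ (Fin.succ_ne_zero j).symm]
    · ext j
      simp [biproduct.ι_π_ne _ (Fin.succ_ne_zero j)]
    · ext j k
      by_cases h : j = k
      · subst h; simp
      · simp [biproduct.ι_π_ne _ (Ne.symm h),
          biproduct.ι_π_ne _ ((Fin.succ_injective _).ne (Ne.symm h))]

noncomputable def biprodPowIso (T : A) : (n : ℕ) → biprodPow T n ≅ ⨁ fun _ : Fin n => T
  | 0 => (isZero_zero A).iso <| by
      rw [IsZero.iff_id_eq_zero]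
      ext j
      exact j.elim0
  | n + 1 =>
      biprod.mapIso (Iso.refl T) (biprodPowIso T n) ≪≫ (biproductFinSuccIso fun _ => T).symm

noncomputable def biprodPowAddIso (T : A) (n : ℕ) :
    (m : ℕ) → biprodPow T (n + m) ≅ biprodPow T n ⊞ biprodPow T m
  | 0 => isoBiprodZero (isZero_zero A)
  | m + 1 => biprod.mapIso (Iso.refl T) (biprodPowAddIso T n m) ≪≫
      (biprod.associator _ _ _).symm ≪≫ biprod.mapIso (biprod.braiding _ _) (Iso.refl _) ≪≫
      biprod.associator _ _ _

section AddClosure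

variable {S : Set A} {T M X X' W : A}

lemma mem_addClosure_of_iso (e : X' ≅ X) (h : X ∈ addClosure S) : X' ∈ addClosure S := by
  obtain ⟨n, f, Y, hf, ⟨e'⟩⟩ := h
  exact ⟨n, f, Y, hf, ⟨biprod.mapIso e (Iso.refl Y) ≪≫ e'⟩⟩

lemma mem_addClosure_of_isSummand (h : IsSummand X W) (hW : W ∈ addClosure S) :
    X ∈ addClosure S := by
  obtain ⟨n, f, Y, hf, ⟨e⟩⟩ := hW
  obtain ⟨Y', ⟨e'⟩⟩ := h.trans ⟨Y, ⟨e⟩⟩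
  exact ⟨n, f, Y', hf, ⟨e'⟩⟩

lemma mem_addClosure_of_mem (h : X ∈ S) : X ∈ addClosure S :=
  ⟨1, fun _ => X, 0, fun _ => h, ⟨biprodPowIso X 1⟩⟩

lemma mem_addClosure_singleton_iff : X ∈ addClosure {T} ↔ ∃ n, IsSummand X (biprodPow T n) := by
  constructor
  · rintro ⟨n, f, Y, hf, ⟨e⟩⟩
    obtain rfl : f = fun _ => T := funext hf
    exact ⟨n, Y, ⟨e ≪≫ (biprodPowIso T n).symm⟩⟩
  · rintro ⟨n, Y, ⟨e⟩⟩
    exact ⟨n, fun _ => T, Y, fun _ => rfl, ⟨e ≪≫ biprodPowIso T n⟩⟩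

lemma mem_addClosure_singleton_of_isZero (h : IsZero X) : X ∈ addClosure {T} :=
  mem_addClosure_singleton_iff.2 ⟨0, IsSummand.of_iso (h.iso (isZero_zero A))⟩

lemma biprod_mem_addClosure_singleton (h : X ∈ addClosure {T}) (h' : X' ∈ addClosure {T}) :
    (X ⊞ X') ∈ addClosure {T} := by
  obtain ⟨n, hn⟩ := mem_addClosure_singleton_iff.1 h
  obtain ⟨m, hm⟩ := mem_addClosure_singleton_iff.1 h'
  exact mem_addClosure_singleton_iff.2
    ⟨n + m, (hn.biprod hm).iso_right (biprodPowAddIso T n m).symm⟩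

lemma IsSummand.biprodPow_mul {k : ℕ} (h : IsSummand M (biprodPow T k)) :
    ∀ n, IsSummand (biprodPow M n) (biprodPow T (k * n))
  | 0 => IsSummand.refl _
  | n + 1 => by
      rw [show k * (n + 1) = k + k * n by ring]
      exact (h.biprod (h.biprodPow_mul n)).iso_right (biprodPowAddIso T k (k * n)).symm

lemma addClosure_singleton_subset (h : M ∈ addClosure {T}) : addClosure {M} ⊆ addClosure {T} := by
  intro X hX
  obtain ⟨k, hk⟩ := mem_addClosure_singleton_iff.1 h
  obtain ⟨n, hn⟩ := mem_addClosure_singleton_iff.1 hX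
  exact mem_addClosure_singleton_iff.2 ⟨k * n, hn.trans (hk.biprodPow_mul n)⟩

end AddClosure

section ShortExactSequences

open ShortComplex

variable {S S' C : ShortComplex A}

lemma shortExact_id_zero (X : A) : (ShortComplex.mk (𝟙 X) (0 : X ⟶ 0) (by simp)).ShortExact :=
  (Splitting.ofIsIsoOfIsZero _ (by dsimp; infer_instance) (isZero_zero A)).shortExact

lemma shortExact_zero_id (X : A) : (ShortComplex.mk (0 : 0 ⟶ X) (𝟙 X) (by simp)).ShortExact :=
  (Splitting.ofIsZeroOfIsIso _ (isZero_zero A) (by dsimp; infer_instance)).shortExact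

lemma shortExact_kernelSequence {X Y : A} (f : X ⟶ Y) [Epi f] : (kernelSequence f).ShortExact :=
  .mk' (kernelSequence_exact f) inferInstance ‹Epi f›

lemma shortExact_mk_iso {X₁ X₂ X₃ Y : A} {f : X₁ ⟶ X₂} {g : X₂ ⟶ X₃} {w : f ≫ g = 0}
    (hS : (ShortComplex.mk f g w).ShortExact) (e : Y ≅ X₂) :
    (ShortComplex.mk (f ≫ e.inv) (e.hom ≫ g) (by simp [w])).ShortExact := by
  refine shortExact_of_iso ?_ hS
  exact ShortComplex.isoMk (Iso.refl _) e.symm (Iso.refl _)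

noncomputable abbrev biprodSeq (S S' : ShortComplex A) : ShortComplex A :=
  ShortComplex.mk (biprod.map S.f S'.f) (biprod.map S.g S'.g) (by ext <;> simp)

lemma shortExact_biprodSeq (hS : S.ShortExact) (hS' : S'.ShortExact) :
    (biprodSeq S S').ShortExact := by
  have := hS.mono_f
  have := hS'.mono_f
  have := hS.epi_g
  have := hS'.epi_g
  have : Mono (biprodSeq S S').f := by dsimp [biprodSeq]; infer_instance
  refine .mk' (exact_of_f_is_kernel _ (KernelFork.IsLimit.ofι' _ _ fun k hk => ?_))
    inferInstance (by dsimp [biprodSeq]; infer_instance)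
  have h₁ : (k ≫ biprod.fst) ≫ S.g = 0 := by simpa [biprodSeq] using hk =≫ biprod.fst
  have h₂ : (k ≫ biprod.snd) ≫ S'.g = 0 := by simpa [biprodSeq] using hk =≫ biprod.snd
  exact ⟨biprod.lift (hS.exact.lift _ h₁) (hS'.exact.lift _ h₂), by ext <;> simp [biprodSeq]⟩

noncomputable abbrev pullbackSeq (S : ShortComplex A) {E : A} (t : E ⟶ S.X₃) : ShortComplex A :=
  ShortComplex.mk (pullback.lift S.f 0 (by simp) : S.X₁ ⟶ pullback S.g t) (pullback.snd S.g t)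
    (pullback.lift_snd _ _ _)

lemma shortExact_pullbackSeq (hS : S.ShortExact) {E : A} (t : E ⟶ S.X₃) :
    (pullbackSeq S t).ShortExact := by
  have := hS.mono_f
  have := hS.epi_g
  have : Mono (pullbackSeq S t).f := mono_of_mono_fac (pullback.lift_fst _ _ _)
  refine .mk' (exact_of_f_is_kernel _ (KernelFork.IsLimit.ofι' _ _ fun k hk => ?_))
    inferInstance (by dsimp [pullbackSeq]; infer_instance)
  have hk : k ≫ pullback.snd S.g t = 0 := hk
  have hk' : (k ≫ pullback.fst S.g t) ≫ S.g = 0 := by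
    rw [Category.assoc, pullback.condition, reassoc_of% hk, zero_comp]
  refine ⟨hS.exact.lift _ hk', pullback.hom_ext ?_ ?_⟩
  · rw [Category.assoc, pullback.lift_fst, Exact.lift_f]
  · rw [Category.assoc, pullback.lift_snd, comp_zero, hk]

noncomputable abbrev compSeq (S : ShortComplex A) {N : A} (p : N ⟶ S.X₂) : ShortComplex A :=
  ShortComplex.mk (pullback.fst p S.f) (p ≫ S.g)
    (by rw [pullback.condition_assoc, S.zero, comp_zero])

lemma shortExact_compSeq (hS : S.ShortExact) {N : A} (p : N ⟶ S.X₂) [Epi p] :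
    (compSeq S p).ShortExact := by
  have := hS.mono_f
  have := hS.epi_g
  have : Mono (compSeq S p).f := by dsimp [compSeq]; infer_instance
  refine .mk' (exact_of_f_is_kernel _ (KernelFork.IsLimit.ofι' _ _ fun k hk => ?_))
    inferInstance (epi_comp p S.g)
  have hk' : (k ≫ p) ≫ S.g = 0 := by simpa using hk
  exact ⟨pullback.lift k (hS.exact.lift _ hk') (hS.exact.lift_f _ _).symm, pullback.lift_fst _ _ _⟩

/-- Pull both sequences back over `Z ⊞ Z'`: the pullback is an extension of the projective `Q`
by `Y`, hence split. -/
lemma exists_shortExact_of_projective_presentation (hS : S.ShortExact) (hC : C.ShortExact)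
    [Projective C.X₂] {Z' : A} (e : C.X₃ ≅ S.X₃ ⊞ Z') :
    ∃ D : ShortComplex A, D.ShortExact ∧ D.X₁ = C.X₁ ∧ D.X₃ = (S.X₂ ⊞ Z') ∧
      Nonempty (D.X₂ ≅ S.X₁ ⊞ C.X₂) := by
  let C' := ShortComplex.mk C.f (C.g ≫ e.hom) (by simp)
  have hC' : C'.ShortExact := by
    refine shortExact_of_iso ?_ hC
    exact ShortComplex.isoMk (Iso.refl _) (Iso.refl _) e
  let B := biprodSeq S (ShortComplex.mk (0 : 0 ⟶ Z') (𝟙 Z') (by simp))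
  have hB : B.ShortExact := shortExact_biprodSeq hS (shortExact_zero_id Z')
  have hE := shortExact_pullbackSeq hB C'.g
  have : Projective (pullbackSeq B C'.g).X₃ := ‹Projective C.X₂›
  refine ⟨pullbackSeq C' B.g, shortExact_pullbackSeq hC' B.g, rfl, rfl,
    ⟨pullbackSymmetry _ _ ≪≫ (hE.splittingOfProjective.isoBinaryBiproduct) ≪≫
      biprod.mapIso (isoBiprodZero (isZero_zero A)).symm (Iso.refl _)⟩⟩

end ShortExactSequences

def HasFiltration (P : Set A) : ℕ → A → Prop
  | 0, Z => IsZero Z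
  | s + 1, Z => ∃ (K Q : A) (f : K ⟶ Z) (g : Z ⟶ Q) (w : f ≫ g = 0),
      (ShortComplex.mk f g w).ShortExact ∧ K ∈ P ∧ HasFiltration P s Q

namespace HasFiltration

variable {P : Set A}

lemma of_shortExact {S : ShortComplex A} {s : ℕ} (hS : S.ShortExact) (h₁ : S.X₁ ∈ P)
    (h₃ : HasFiltration P s S.X₃) : HasFiltration P (s + 1) S.X₂ :=
  ⟨_, _, S.f, S.g, S.zero, hS, h₁, h₃⟩

lemma of_iso {Z Z' : A} (e : Z' ≅ Z) : ∀ {s}, HasFiltration P s Z → HasFiltration P s Z'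
  | 0, h => IsZero.of_iso h e
  | _ + 1, ⟨_, _, _, _, _, hS, hK, hQ⟩ => ⟨_, _, _, _, _, shortExact_mk_iso hS e, hK, hQ⟩

lemma one {Z : A} (h : Z ∈ P) : HasFiltration P 1 Z :=
  of_shortExact (shortExact_id_zero Z) h (isZero_zero A)

end HasFiltration

section Bracket

variable {T : A}

lemma mem_bracket_of_hasFiltration : ∀ {s : ℕ} {Z : A},
    HasFiltration (addClosure {T}) s Z → Z ∈ bracket {T} s
  | 0, _, h => h
  | 1, _, ⟨_, _, f, _, _, hS, hK, hQ⟩ => by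
      have : IsIso f := hS.isIso_f_iff.2 hQ
      exact mem_addClosure_of_iso (asIso f).symm hK
  | _ + 2, _, ⟨_, _, _, _, _, hS, hK, hQ⟩ =>
      mem_addClosure_of_mem ⟨_, hS, rfl, hK, mem_bracket_of_hasFiltration hQ⟩

lemma mem_bracket_succ_of_isSummand {X W : A} {n : ℕ} (h : IsSummand X W) :
    W ∈ bracket {T} (n + 1) → X ∈ bracket {T} (n + 1) :=
  match n with
  | 0 => mem_addClosure_of_isSummand h
  | _ + 1 => mem_addClosure_of_isSummand h

end Bracket

def HasProjPresentation (P K : Set A) (Z : A) : Prop :=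
  ∃ C : ShortComplex A, C.ShortExact ∧ Projective C.X₂ ∧ C.X₂ ∈ P ∧ C.X₁ ∈ K ∧
    Nonempty (C.X₃ ≅ Z)

namespace HasProjPresentation

variable {T T' Z Z' : A}

lemma of_iso {P K : Set A} (e : Z ≅ Z') (h : HasProjPresentation P K Z) :
    HasProjPresentation P K Z' := by
  obtain ⟨C, hC, hCproj, hCP, hCK, ⟨e'⟩⟩ := h
  exact ⟨C, hC, hCproj, hCP, hCK, ⟨e' ≪≫ e⟩⟩

lemma zero : HasProjPresentation (addClosure {T}) (addClosure {T'}) 0 :=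
  ⟨_, shortExact_id_zero 0, inferInstanceAs (Projective (0 : A)),
    mem_addClosure_singleton_of_isZero (isZero_zero A),
    mem_addClosure_singleton_of_isZero (isZero_zero A), ⟨Iso.refl _⟩⟩

lemma biprod (h : HasProjPresentation (addClosure {T}) (addClosure {T'}) Z)
    (h' : HasProjPresentation (addClosure {T}) (addClosure {T'}) Z') :
    HasProjPresentation (addClosure {T}) (addClosure {T'}) (Z ⊞ Z') := by
  obtain ⟨C, hC, hCproj, hCP, hCK, ⟨e⟩⟩ := h
  obtain ⟨C', hC', hC'proj, hC'P, hC'K, ⟨e'⟩⟩ := h'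
  exact ⟨biprodSeq C C', shortExact_biprodSeq hC hC',
    inferInstanceAs (Projective (C.X₂ ⊞ C'.X₂)), biprod_mem_addClosure_singleton hCP hC'P,
    biprod_mem_addClosure_singleton hCK hC'K, ⟨biprod.mapIso e e'⟩⟩

lemma biprodPow (h : HasProjPresentation (addClosure {T}) (addClosure {T'}) Z) :
    ∀ n, HasProjPresentation (addClosure {T}) (addClosure {T'}) (biprodPow Z n)
  | 0 => zero
  | n + 1 => h.biprod (h.biprodPow n)

end HasProjPresentation

/-- Presentations are only required of `Z ⊞ Z'` for a complement `Z'` in the same level: summands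
of powers of a presented object have them, and no Schanuel lemma is needed. -/
structure IsSyzygyTower (T : ℕ → A) : Prop where
  mem_succ : ∀ g, T g ∈ addClosure {T (g + 1)}
  exists_presentation : ∀ g Z, Z ∈ addClosure {T g} → ∃ Z' ∈ addClosure {T g},
    HasProjPresentation (addClosure {T g}) (addClosure {T (g + 1)}) (Z ⊞ Z')

namespace IsSyzygyTower

variable {T : ℕ → A}

lemma addClosure_mono (hT : IsSyzygyTower T) : Monotone fun g => addClosure {T g} :=
  monotone_nat_of_le_succ fun g => addClosure_singleton_subset (hT.mem_succ g)

lemma exists_hasFiltration_of_shortExact (hT : IsSyzygyTower T) :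
    ∀ (s g : ℕ) (S : ShortComplex A), S.ShortExact → S.X₂ ∈ addClosure {T (g + 1)} →
    HasFiltration (addClosure {T g}) s S.X₃ →
    ∃ R ∈ addClosure {T (g + 1)}, HasFiltration (addClosure {T (g + 1)}) (s + 1) (S.X₁ ⊞ R)
  | 0, g, S, hS, hN, hC => by
      have : IsIso S.f := hS.isIso_f_iff.2 hC
      refine ⟨0, mem_addClosure_singleton_of_isZero (isZero_zero A), .one ?_⟩
      exact mem_addClosure_of_iso ((isoBiprodZero (isZero_zero A)).symm ≪≫ asIso S.f) hN
  | s + 1, g, S, hS, hN, ⟨B, C₂, a, c, w, hD, hB, hC₂⟩ => by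
      -- Pulling `S` back to the first layer `B` of `S.X₃` and presenting `B` yields the first
      -- layer `C.X₁` of the new filtration; the rest comes from `S.X₂ ⊞ Z' ↠ C₂` by induction.
      have := hS.epi_g
      obtain ⟨Z', hZ', C, hC, hCproj, hCP, hCK, ⟨e⟩⟩ := hT.exists_presentation g B hB
      obtain ⟨D, hD', hD₁, hD₃, ⟨eD⟩⟩ :=
        exists_shortExact_of_projective_presentation (shortExact_pullbackSeq hS a) hC e
      have hF := shortExact_biprodSeq (shortExact_compSeq hD S.g) (shortExact_id_zero Z')
      obtain ⟨R, hR, hRF⟩ := hT.exists_hasFiltration_of_shortExact s g _ hF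
        (biprod_mem_addClosure_singleton hN (hT.addClosure_mono g.le_succ hZ'))
        (hC₂.of_iso (isoBiprodZero (isZero_zero A)).symm)
      refine ⟨C.X₂ ⊞ R, biprod_mem_addClosure_singleton (hT.addClosure_mono g.le_succ hCP) hR, ?_⟩
      refine HasFiltration.of_iso
        ((biprod.associator _ _ _).symm ≪≫ biprod.mapIso eD.symm (Iso.refl R)) ?_
      refine .of_shortExact (shortExact_biprodSeq hD' (shortExact_zero_id R)) ?_ ?_
      · exact biprod_mem_addClosure_singleton (hD₁ ▸ hCK)
          (mem_addClosure_singleton_of_isZero (isZero_zero A))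
      · show HasFiltration _ _ (D.X₃ ⊞ R)
        rw [hD₃]
        exact hRF

lemma exists_hasFiltration_of_classCores (hT : IsSyzygyTower T) {P : Set A}
    (hP : P ⊆ addClosure {T 0}) :
    ∀ (t : ℕ) (X : A), ClassCores P t X →
      ∃ R ∈ addClosure {T t}, HasFiltration (addClosure {T t}) (t + 1) (X ⊞ R)
  | 0, X, hX => ⟨0, mem_addClosure_singleton_of_isZero (isZero_zero A),
      .one (biprod_mem_addClosure_singleton (hP hX)
        (mem_addClosure_singleton_of_isZero (isZero_zero A)))⟩
  | t + 1, _, ⟨S, hS, rfl, hN, hC⟩ => by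
      obtain ⟨R, hR, hRF⟩ := hT.exists_hasFiltration_of_classCores hP t S.X₃ hC
      obtain ⟨R', hR', hR'F⟩ := hT.exists_hasFiltration_of_shortExact (t + 1) t _
        (shortExact_biprodSeq hS (shortExact_zero_id R))
        (biprod_mem_addClosure_singleton (hT.addClosure_mono t.succ.zero_le (hP hN))
          (hT.addClosure_mono t.le_succ hR)) hRF
      exact ⟨R', hR', hR'F.of_iso
        (biprod.mapIso (isoBiprodZero (isZero_zero A)) (Iso.refl R'))⟩

end IsSyzygyTower

section SyzygyTower

variable [EnoughProjectives A]

noncomputable def syzygy (M : A) : ℕ → A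
  | 0 => M
  | j + 1 => kernel (Projective.π (syzygy M j))

noncomputable def syzygyBlock (M : A) (j : ℕ) : A :=
  syzygy M j ⊞ Projective.over (syzygy M j)

noncomputable def syzygyTower (M : A) : ℕ → A
  | 0 => syzygyBlock M 0
  | g + 1 => syzygyBlock M (g + 1) ⊞ syzygyTower M g

variable (M : A)

lemma isSummand_syzygyBlock_syzygyTower {j g : ℕ} (h : j ≤ g) :
    IsSummand (syzygyBlock M j) (syzygyTower M g) := by
  induction g with
  | zero =>
    obtain rfl := Nat.le_zero.1 h
    exact .refl _
  | succ g ih =>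
    obtain rfl | h := h.eq_or_lt
    · exact .inl _ _
    · exact (ih (Nat.lt_succ_iff.1 h)).trans (.inr _ _)

lemma syzygy_mem_addClosure {j g : ℕ} (h : j ≤ g) :
    syzygy M j ∈ addClosure {syzygyTower M g} :=
  mem_addClosure_of_isSummand ((IsSummand.inl _ _).trans (isSummand_syzygyBlock_syzygyTower M h))
    (mem_addClosure_of_mem rfl)

lemma over_syzygy_mem_addClosure {j g : ℕ} (h : j ≤ g) :
    Projective.over (syzygy M j) ∈ addClosure {syzygyTower M g} :=
  mem_addClosure_of_isSummand ((IsSummand.inr _ _).trans (isSummand_syzygyBlock_syzygyTower M h))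
    (mem_addClosure_of_mem rfl)

lemma hasProjPresentation_syzygyBlock {j g : ℕ} (h : j ≤ g) :
    HasProjPresentation (addClosure {syzygyTower M g}) (addClosure {syzygyTower M (g + 1)})
      (syzygyBlock M j) :=
  ⟨biprodSeq (ShortComplex.kernelSequence (Projective.π (syzygy M j)))
      (ShortComplex.mk (0 : (0 : A) ⟶ Projective.over (syzygy M j)) (𝟙 _) zero_comp),
    shortExact_biprodSeq (shortExact_kernelSequence _) (shortExact_zero_id _),
    inferInstanceAs (Projective (Projective.over (syzygy M j) ⊞ Projective.over (syzygy M j))),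
    biprod_mem_addClosure_singleton (over_syzygy_mem_addClosure M h)
      (over_syzygy_mem_addClosure M h),
    biprod_mem_addClosure_singleton (syzygy_mem_addClosure M (Nat.succ_le_succ h))
      (mem_addClosure_singleton_of_isZero (isZero_zero A)),
    ⟨Iso.refl _⟩⟩

lemma hasProjPresentation_syzygyTower {g : ℕ} : ∀ {g'}, g' ≤ g →
    HasProjPresentation (addClosure {syzygyTower M g}) (addClosure {syzygyTower M (g + 1)})
      (syzygyTower M g')
  | 0, h => hasProjPresentation_syzygyBlock M h
  | _ + 1, h => (hasProjPresentation_syzygyBlock M h).biprod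
      (hasProjPresentation_syzygyTower (Nat.le_of_succ_le h))

lemma isSyzygyTower_syzygyTower : IsSyzygyTower (syzygyTower M) where
  mem_succ _ := mem_addClosure_of_isSummand (.inr _ _) (mem_addClosure_of_mem rfl)
  exists_presentation g Z hZ := by
    obtain ⟨n, Y, ⟨e⟩⟩ := mem_addClosure_singleton_iff.1 hZ
    refine ⟨Y, mem_addClosure_singleton_iff.2 ⟨n, Z, ⟨biprod.braiding Y Z ≪≫ e⟩⟩, ?_⟩
    exact ((hasProjPresentation_syzygyTower M le_rfl).biprodPow n).of_iso e.symm

end SyzygyTower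

lemma _root_.CoresHomExact.classCores {M : A} :
    ∀ {n : ℕ} {X : A}, CoresHomExact M n X → ClassCores (addClosure {M}) n X
  | 0, _, h => h
  | _ + 1, _, ⟨S, hS, h₁, h₂, _, h₃⟩ => ⟨S, hS, h₁, h₂, h₃.classCores⟩

lemma extDim_le_of_forall_classCores [EnoughProjectives A] (M : A) (d : ℕ)
    (h : ∀ X, ClassCores (addClosure {M}) d X) : extDim A ≤ d := by
  refine sInf_le ⟨d, syzygyTower M d, rfl, Set.eq_univ_of_forall fun X => ?_⟩
  obtain ⟨R, -, hR⟩ := (isSyzygyTower_syzygyTower M).exists_hasFiltration_of_classCores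
    (addClosure_singleton_subset (syzygy_mem_addClosure M (Nat.zero_le 0))) d X (h X)
  exact mem_bracket_succ_of_isSummand (.inl X R) (mem_bracket_of_hasFiltration hR)

end ExtensionDimension

theorem extDim_le_repDim_sub_two_general (A : Type u) [Category.{v} A] [Abelian A]
    [EnoughProjectives A] :
    extDim A ≤ repDim A - 2 := by
  refine ENat.le_sub_of_add_le_right (ENat.natCast_ne_top 2) (le_sInf ?_)
  rintro _ ⟨i, rfl, hi, M, hM⟩
  have hd := ExtensionDimension.extDim_le_of_forall_classCores M (i - 2)
    fun X => (hM X).2.classCores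
  calc extDim A + 2 ≤ ((i - 2 : ℕ) : ℕ∞) + 2 := add_le_add_left hd 2
    _ = i := by norm_cast; omega

/-- If an abelian category with enough projectives and enough injectives admits an
additive generating object, then its extension dimension is at most its representation
dimension minus two. -/
theorem extDim_le_repDim_sub_two (A : Type u) [Category.{v} A] [Abelian A]
    [EnoughProjectives A] [EnoughInjectives A] (hG : HasAddGenerator A) :
    extDim A ≤ repDim A - 2 :=
  extDim_le_repDim_sub_two_general A
end
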